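/- Let (g,[.,.]) be a Leibniz algebra over a field K, T a Rota-Baxter operator on g, and (V, l, r, T_V) a representation of the Rota-Baxter Leibniz algebra (g,[.,.],T). Define C^n = Hom(g^{⊗n},V) ⊕ Hom(g^{⊗(n−1)},V) for n ≥ 1 and d^n : C^n → C^{n+1} by d^n(α,β) = (δ^n(α), −∂^{n−1}(β) − φ^n(α)), where δ^n is the Loday–Pirashvili coboundary of (g,[.,.]) with coefficients in (V,l,r), ∂^n is the Loday–Pirashvili coboundary of the induced Leibniz algebra (g,[.,.]_*) with coefficients in the induced representation (V,l',r'), and φ^n(f)(x_1,…,x_n) = f(Tx_1,…,Tx_n) − Σ_{i=1}^{n} T_V(f(Tx_1,…,Tx_{i−1}, x_i, Tx_{i+1},…,Tx_n)). Then d^{n+1} ∘ d^n = 0 for all n ≥ 1. -/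

import Mathlib

/-- A bilinear map between modules over a field `K`, expressed as a predicate
on a curried two-argument function. -/
def Bilin (K : Type*) [Field K] {A B C : Type*} [AddCommGroup A] [Module K A]
    [AddCommGroup B] [Module K B] [AddCommGroup C] [Module K C]
    (f : A → B → C) : Prop :=
  (∀ a a' b, f (a + a') b = f a b + f a' b) ∧
  (∀ (c : K) (a : A) (b : B), f (c • a) b = c • f a b) ∧
  (∀ a b b', f a (b + b') = f a b + f a b') ∧
  (∀ (c : K) (a : A) (b : B), f a (c • b) = c • f a b)

/-- The (left) Leibniz identity for a bracket. -/
def IsLeibnizBracket {g : Type*} [AddCommGroup g] (br : g → g → g) : Prop :=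
  ∀ x y z, br x (br y z) = br (br x y) z + br y (br x z)


/-- A representation of a Leibniz algebra `(g, br)` on `V`, given by left and
right actions `l : g → V → V` and `r : V → g → V`. -/
def IsLeibnizRep {g V : Type*} [AddCommGroup g] [AddCommGroup V]
    (br : g → g → g) (l : g → V → V) (r : V → g → V) : Prop :=
  (∀ x y u, l x (l y u) = l (br x y) u + l y (l x u)) ∧
  (∀ x y u, l x (r u y) = r (l x u) y + r u (br x y)) ∧
  (∀ x y u, r u (br x y) = r (r u x) y + l x (r u y))

/-- A representation of a Rota-Baxter Leibniz algebra `(g, br, T)` on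
`(V, l, r, TV)`. -/
def IsRBRep {g V : Type*} [AddCommGroup g] [AddCommGroup V]
    (br : g → g → g) (T : g → g) (l : g → V → V) (r : V → g → V)
    (TV : V → V) : Prop :=
  IsLeibnizRep br l r ∧
  (∀ x u, l (T x) (TV u) = TV (l (T x) u + l x (TV u))) ∧
  (∀ x u, r (TV u) (T x) = TV (r (TV u) x + r u (T x)))

/-- The Loday–Pirashvili coboundary of a Leibniz algebra `(g, br)` with
coefficients in a representation `(V, l, r)`, on `n`-cochains
`f : g^n → V` (indices are `0`-based, corresponding to `x_1, …, x_{n+1}` in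
the classical `1`-based notation). -/
def lpCoboundary {g V : Type*} [AddCommGroup g] [AddCommGroup V]
    (br : g → g → g) (l : g → V → V) (r : V → g → V) (n : ℕ)
    (f : (Fin n → g) → V) : (Fin (n + 1) → g) → V :=
  fun x =>
    (∑ i : Fin n, ((-1 : ℤ) ^ (i : ℕ)) •
        l (x i.castSucc) (f fun k => x (i.castSucc.succAbove k)))
      + ((-1 : ℤ) ^ (n + 1)) • r (f fun k => x k.castSucc) (x (Fin.last n))
      + ∑ i : Fin (n + 1), ∑ j : Fin n,
          if (i : ℕ) ≤ (j : ℕ) then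
            ((-1 : ℤ) ^ ((i : ℕ) + 1)) •
              f (Function.update (fun k => x (i.succAbove k)) j
                  (br (x i) (x j.succ)))
          else 0

/-- The map `φ^n : Hom(g^{⊗n}, V) → Hom(g^{⊗n}, V)` given by
`φ^n(f)(x_1,…,x_n) = f(Tx_1,…,Tx_n)
  - Σ_i T_V (f (Tx_1,…,Tx_{i-1}, x_i, Tx_{i+1},…,Tx_n))`. -/
def phiMap {g V : Type*} [AddCommGroup V] (T : g → g) (TV : V → V) (n : ℕ)
    (f : (Fin n → g) → V) : (Fin n → g) → V :=
  fun x =>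
    f (fun k => T (x k))
      - ∑ i : Fin n, TV (f (Function.update (fun k => T (x k)) i (x i)))

/-!
The first component is `δ ∘ δ = 0`, which holds for every Leibniz algebra with a representation:
by Cartan's formula `δ f (x, y) = L_x f (y) - δ (ι_x f) (y)` and the fact that the Lie derivative
`L_x` commutes with `δ`, it follows by induction on the degree. Applied to the induced Leibniz
algebra `(g, [·,·]_*)` with the induced representation it also gives `∂ ∘ ∂ = 0`. The second
component is then `∂ (φ α) - φ (δ α)`, which vanishes because `φ` is a chain map; this is again an
induction through Cartan's formula, the key inputs being that `T_V ∘ (-) ∘ T` intertwines `δ` with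
`∂` and the Rota–Baxter identities for `T` and `T_V`.

Actions are bundled additively in their `V`-argument, and a right action `r : V × g → V` is stored
flipped, as `r x u = r(u, x)`; then `l'` and `r'` are given by the same formula `starAction`.
Cochains are only required to be additive in each argument, i.e. `ℕ`-multilinear.
-/

open Function Finset

theorem Fin.cons_succ_succAbove_apply {α : Type*} {n : ℕ} (x : α) (p : Fin (n + 1) → α)
    (i k : Fin (n + 1)) :
    (Fin.cons x p : Fin (n + 2) → α) (i.succ.succAbove k)
      = (Fin.cons x (fun k => p (i.succAbove k)) : Fin (n + 1) → α) k :=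
  congrFun (Fin.cons_comp_succ_succAbove x p i) k

theorem Fin.cons_castSucc_apply {α : Type*} {n : ℕ} (x : α) (p : Fin (n + 1) → α)
    (k : Fin (n + 1)) :
    (Fin.cons x p : Fin (n + 2) → α) k.castSucc
      = (Fin.cons x (fun k => p k.castSucc) : Fin (n + 1) → α) k := by
  cases k using Fin.cases <;> simp

theorem Fin.sum_update_eq_add_sum_update_succAbove {α M : Type*} [AddCommMonoid M] {n : ℕ}
    (c : α → α) (y : Fin (n + 1) → α) (q : Fin (n + 1)) (G : α → (Fin n → α) → M) :
    ∑ p, G (update y p (c (y p)) q) (fun k => update y p (c (y p)) (q.succAbove k))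
      = G (c (y q)) (fun k => y (q.succAbove k))
        + ∑ k, G (y q) (update (fun k => y (q.succAbove k)) k (c (y (q.succAbove k)))) := by
  rw [Fin.sum_univ_succAbove _ q, update_self,
    update_comp_eq_of_forall_ne' _ _ (Fin.succAbove_ne q)]
  congr 1
  refine sum_congr rfl fun k _ => ?_
  rw [update_of_ne (Fin.succAbove_ne q k).symm,
    update_comp_eq_of_injective' _ Fin.succAbove_right_injective]

theorem Finset.sum_update_update_eq_add_sum_erase {ι α M : Type*} [Fintype ι] [DecidableEq ι]
    [AddCommMonoid M] (F : (ι → α) → M) (z u : ι → α) (i₀ : ι) (a b : α) :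
    ∑ i, F (update (update z i₀ a) i (update u i₀ b i))
      = F (update z i₀ b) + ∑ i ∈ univ.erase i₀, F (update (update z i₀ a) i (u i)) := by
  rw [← add_sum_erase _ _ (mem_univ i₀), update_self, update_idem]
  congr 1
  exact sum_congr rfl fun i hi => by rw [update_of_ne (ne_of_mem_erase hi)]

theorem Finset.sum_sum_erase_update_update_comm {ι α M : Type*} [Fintype ι] [DecidableEq ι]
    [AddCommMonoid M] (F : (ι → α) → M) (z u v : ι → α) :
    ∑ i, ∑ j ∈ univ.erase i, F (update (update z i (u i)) j (v j))
      = ∑ j, ∑ i ∈ univ.erase j, F (update (update z j (v j)) i (u i)) := by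
  rw [sum_comm' (t' := univ) (s' := fun j => univ.erase j) (by simp [and_comm, ne_comm])]
  exact sum_congr rfl fun j _ => sum_congr rfl fun i hi => by
    rw [update_comm (ne_of_mem_erase hi)]

section LodayPirashvili

variable {g V : Type*} [AddCommGroup V]

def lpLeftTerm (l : g → V → V) (n : ℕ) (f : (Fin n → g) → V) : (Fin (n + 1) → g) → V :=
  fun x => ∑ i : Fin n, ((-1 : ℤ) ^ (i : ℕ)) •
    l (x i.castSucc) (f fun k => x (i.castSucc.succAbove k))

def lpRightTerm (r : V → g → V) (n : ℕ) (f : (Fin n → g) → V) : (Fin (n + 1) → g) → V :=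
  fun x => ((-1 : ℤ) ^ (n + 1)) • r (f fun k => x k.castSucc) (x (Fin.last n))

def bracketFace (br : g → g → g) {n : ℕ} (i : Fin (n + 1)) (j : Fin n) (x : Fin (n + 1) → g) :
    Fin n → g :=
  update (fun k => x (i.succAbove k)) j (br (x i) (x j.succ))

def lpBracketTerm (br : g → g → g) (n : ℕ) (f : (Fin n → g) → V) :
    (Fin (n + 1) → g) → V :=
  fun x => ∑ i : Fin (n + 1), ∑ j : Fin n,
    if (i : ℕ) ≤ (j : ℕ) then ((-1 : ℤ) ^ ((i : ℕ) + 1)) • f (bracketFace br i j x) else 0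

def cochainLieDeriv (br : g → g → g) (l : g → V → V) (x : g) {n : ℕ}
    (f : (Fin n → g) → V) : (Fin n → g) → V :=
  fun y => l x (f y) - ∑ j, f (update y j (br x (y j)))

theorem lpCoboundary_eq_add [AddCommGroup g] (br : g → g → g) (l : g → V → V) (r : V → g → V)
    (n : ℕ) (f : (Fin n → g) → V) :
    lpCoboundary br l r n f = lpLeftTerm l n f + lpRightTerm r n f + lpBracketTerm br n f :=
  rfl

theorem lpCoboundary_succ_cons [AddCommGroup g] (br : g → g → g) (l : g → V → V)
    (r : V → g → V) {n : ℕ} (f : (Fin (n + 1) → g) → V) (x : g) (y : Fin (n + 1) → g) :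
    lpCoboundary br l r (n + 1) f (Fin.cons x y)
      = cochainLieDeriv br l x f y - lpCoboundary br l r n (fun z => f (Fin.cons x z)) y := by
  simp only [lpCoboundary, cochainLieDeriv]
  rw [Fin.sum_univ_succ, Fin.sum_univ_succ (n := n + 1),
    Fin.sum_univ_succ (f := fun j => f (update y j (br x (y j))))]
  simp only [Fin.sum_univ_succ (n := n) (f := fun j => ite _ _ _)]
  -- the terms with `i = 0` make up `L_x f`; the remaining ones are those of `δ (ι_x f)`, negated
  simp only [Fin.coe_ofNat_eq_mod, Nat.zero_mod, Fin.castSucc_zero, Fin.cons_zero,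
    Fin.zero_succAbove, Fin.cons_succ, Fin.val_succ, pow_succ, mul_neg, mul_one, Fin.castSucc_succ,
    Fin.cons_succ_succAbove_apply, neg_smul, sum_neg_distrib, Fin.cons_castSucc_apply,
    Fin.cons_last, ↓reduceIte, zero_le, nonpos_iff_eq_zero, Nat.add_eq_zero_iff, one_ne_zero,
    and_false, add_le_add_iff_right, ← sum_filter, Fin.cons_update]
  abel

variable (br : g → g → g) (l r : g → V →+ V)

theorem cochainLieDeriv_add (a : g) {n : ℕ} (F G : (Fin n → g) → V) :
    cochainLieDeriv br (fun x => l x) a (F + G)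
      = cochainLieDeriv br (fun x => l x) a F + cochainLieDeriv br (fun x => l x) a G := by
  funext y
  simp only [cochainLieDeriv, Pi.add_apply, map_add, sum_add_distrib]
  abel

theorem lpLeftTerm_cochainLieDeriv (hl : ∀ x y u, l x (l y u) = l (br x y) u + l y (l x u))
    (a : g) {n : ℕ} (f : (Fin n → g) → V) :
    lpLeftTerm (fun x => l x) n (cochainLieDeriv br (fun x => l x) a f)
      = cochainLieDeriv br (fun x => l x) a (lpLeftTerm (fun x => l x) n f) := by
  funext y
  simp only [lpLeftTerm, cochainLieDeriv, map_sum, map_zsmul, map_sub, smul_sub,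
    sum_sub_distrib, smul_sum]
  rw [sum_comm (s := univ (α := Fin (n + 1))), ← sum_sub_distrib, ← sum_sub_distrib]
  refine sum_congr rfl fun i _ => ?_
  rw [Fin.sum_update_eq_add_sum_update_succAbove (fun b => br a b) y i.castSucc
    (fun u z => ((-1 : ℤ) ^ (i : ℕ)) • l u (f z)), hl a]
  simp only [smul_add]
  abel

theorem lpRightTerm_cochainLieDeriv (hr : ∀ x y u, l x (r y u) = r y (l x u) + r (br x y) u)
    (a : g) {n : ℕ} (f : (Fin n → g) → V) :
    lpRightTerm (fun u x => r x u) n (cochainLieDeriv br (fun x => l x) a f)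
      = cochainLieDeriv br (fun x => l x) a (lpRightTerm (fun u x => r x u) n f) := by
  funext y
  have hsplit := Fin.sum_update_eq_add_sum_update_succAbove (fun b => br a b) y (Fin.last n)
    (fun u z => ((-1 : ℤ) ^ (n + 1)) • r u (f z))
  simp only [Fin.succAbove_last] at hsplit
  simp only [lpRightTerm, cochainLieDeriv, map_sum, map_zsmul, map_sub, smul_sub, smul_sum,
    hsplit, hr a]
  simp only [smul_add]
  abel

variable [AddCommGroup g]

theorem lpCoboundary_add {n : ℕ} (f₁ f₂ : (Fin n → g) → V) :
    lpCoboundary br (fun x => l x) (fun u x => r x u) n (f₁ + f₂)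
      = lpCoboundary br (fun x => l x) (fun u x => r x u) n f₁
        + lpCoboundary br (fun x => l x) (fun u x => r x u) n f₂ := by
  funext y
  simp only [lpCoboundary, Pi.add_apply, map_add, smul_add, ← sum_filter, sum_add_distrib]
  abel

theorem lpCoboundary_sub {n : ℕ} (f₁ f₂ : (Fin n → g) → V) :
    lpCoboundary br (fun x => l x) (fun u x => r x u) n (f₁ - f₂)
      = lpCoboundary br (fun x => l x) (fun u x => r x u) n f₁
        - lpCoboundary br (fun x => l x) (fun u x => r x u) n f₂ :=
  map_sub (AddMonoidHom.mk' _ (lpCoboundary_add br l r)) f₁ f₂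

theorem lpCoboundary_neg {n : ℕ} (f : (Fin n → g) → V) :
    lpCoboundary br (fun x => l x) (fun u x => r x u) n (-f)
      = -lpCoboundary br (fun x => l x) (fun u x => r x u) n f :=
  map_neg (AddMonoidHom.mk' _ (lpCoboundary_add br l r)) f

/-- The Leibniz identity makes `[a, -]` a derivation, so it passes through the bracket of a face. -/
theorem sum_bracketFace_update (hbr : IsLeibnizBracket br) {n : ℕ}
    (f : MultilinearMap ℕ (fun _ : Fin n => g) V) (a : g) (y : Fin (n + 1) → g)
    (i : Fin (n + 1)) (j : Fin n) (hij : (i : ℕ) ≤ j) :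
    ∑ p, f (bracketFace br i j (update y p (br a (y p))))
      = ∑ k, f (update (bracketFace br i j y) k (br a (bracketFace br i j y k))) := by
  have hsucc : i.succAbove j = j.succ :=
    Fin.succAbove_of_le_castSucc _ _ (by simpa [Fin.le_def] using hij)
  have hne : j.succ ≠ i := Fin.ne_of_val_ne (by rw [Fin.val_succ]; omega)
  rw [Fin.sum_univ_succAbove _ i, ← add_sum_erase _ _ (mem_univ j),
    ← add_sum_erase _ _ (mem_univ j)]
  have hoff : ∀ k ∈ univ.erase j,
      f (bracketFace br i j (update y (i.succAbove k) (br a (y (i.succAbove k)))))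
        = f (update (bracketFace br i j y) k (br a (bracketFace br i j y k))) := by
    intro k hk
    have hkj : k ≠ j := ne_of_mem_erase hk
    have hjk : j.succ ≠ i.succAbove k := hsucc ▸ Fin.succAbove_right_injective.ne hkj.symm
    simp only [bracketFace, update_comp_eq_of_injective' _ Fin.succAbove_right_injective,
      update_of_ne (Fin.succAbove_ne i k).symm, update_of_ne hjk, update_of_ne hkj,
      update_comm hkj]
  rw [sum_congr rfl hoff, ← add_assoc]
  congr 1
  simp only [bracketFace]
  rw [update_comp_eq_of_injective' y Fin.succAbove_right_injective j]
  simp only [update_comp_eq_of_forall_ne' _ _ (Fin.succAbove_ne i), update_self, update_idem,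
    update_of_ne hne, update_of_ne hne.symm, hsucc, hbr a, f.map_update_add]

theorem lpBracketTerm_cochainLieDeriv (hbr : IsLeibnizBracket br) (a : g) {n : ℕ}
    (f : MultilinearMap ℕ (fun _ : Fin n => g) V) :
    lpBracketTerm br n (cochainLieDeriv br (fun x => l x) a f)
      = cochainLieDeriv br (fun x => l x) a (lpBracketTerm br n f) := by
  funext y
  simp only [lpBracketTerm, cochainLieDeriv, ← sum_filter, map_sum, map_zsmul, smul_sub,
    sum_sub_distrib]
  rw [sub_right_inj, sum_comm]
  refine sum_congr rfl fun i _ => ?_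
  rw [sum_comm]
  refine sum_congr rfl fun j hj => ?_
  rw [← smul_sum, sum_bracketFace_update br hbr f a y i j (mem_filter.1 hj).2]

theorem lpCoboundary_cochainLieDeriv (hbr : IsLeibnizBracket br)
    (hrep : IsLeibnizRep br (fun x => l x) (fun u x => r x u)) (a : g) {n : ℕ}
    (f : MultilinearMap ℕ (fun _ : Fin n => g) V) :
    lpCoboundary br (fun x => l x) (fun u x => r x u) n (cochainLieDeriv br (fun x => l x) a f)
      = cochainLieDeriv br (fun x => l x) a
          (lpCoboundary br (fun x => l x) (fun u x => r x u) n f) := by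
  rw [lpCoboundary_eq_add, lpCoboundary_eq_add, cochainLieDeriv_add, cochainLieDeriv_add,
    lpLeftTerm_cochainLieDeriv br l hrep.1, lpRightTerm_cochainLieDeriv br l r hrep.2.1,
    lpBracketTerm_cochainLieDeriv br l hbr]

theorem lpCoboundary_lpCoboundary (hbr : IsLeibnizBracket br)
    (hrep : IsLeibnizRep br (fun x => l x) (fun u x => r x u)) {n : ℕ}
    (f : MultilinearMap ℕ (fun _ : Fin n => g) V) :
    lpCoboundary br (fun x => l x) (fun u x => r x u) (n + 1)
      (lpCoboundary br (fun x => l x) (fun u x => r x u) n f) = 0 := by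
  induction n with
  | zero =>
    funext x
    have hf (z : Fin 0 → g) : f z = f 0 := congrArg f (Subsingleton.elim _ _)
    simp [lpCoboundary, hf, hrep.2.2, add_comm, add_assoc]
  | succ n ih =>
    funext x
    have hcartan : (fun z => lpCoboundary br (fun x => l x) (fun u x => r x u) (n + 1) f
          (Fin.cons (x 0) z))
        = cochainLieDeriv br (fun x => l x) (x 0) f
          - lpCoboundary br (fun x => l x) (fun u x => r x u) n (f.curryLeft (x 0)) :=
      funext fun z => lpCoboundary_succ_cons _ _ _ f (x 0) z
    rw [← Fin.cons_self_tail x, lpCoboundary_succ_cons, hcartan, lpCoboundary_sub,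
      lpCoboundary_cochainLieDeriv br l r hbr hrep, ih]
    simp

end LodayPirashvili

section RotaBaxter

variable {g V : Type*} [AddCommGroup V]

def starAction (T : g → g) (TV : V →+ V) (ρ : g → V →+ V) : g → V →+ V :=
  fun x => ρ (T x) - TV.comp (ρ x)

def IsRBAction (T : g → g) (TV : V →+ V) (ρ : g → V →+ V) : Prop :=
  ∀ x u, ρ (T x) (TV u) = TV (ρ (T x) u + ρ x (TV u))

@[simp]
theorem starAction_apply (T : g → g) (TV : V →+ V) (ρ : g → V →+ V) (x : g) (u : V) :
    starAction T TV ρ x u = ρ (T x) u - TV (ρ x u) :=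
  rfl

theorem IsRBAction.starAction_apply_map {T : g → g} {TV : V →+ V} {ρ : g → V →+ V}
    (hρ : IsRBAction T TV ρ) (x : g) (u : V) :
    starAction T TV ρ x (TV u) = TV (ρ (T x) u) := by
  rw [starAction_apply, hρ, map_add, add_sub_cancel_right]

theorem phiMap_cons (T : g → g) (TV : V → V) {n : ℕ} (F : (Fin (n + 1) → g) → V)
    (x : g) (y : Fin n → g) :
    phiMap T TV (n + 1) F (Fin.cons x y)
      = phiMap T TV n (fun z => F (Fin.cons (T x) z)) y
        - TV (F (Fin.cons x fun k => T (y k))) := by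
  have hT : (fun k => T ((Fin.cons x y : Fin (n + 1) → g) k)) = Fin.cons (T x) fun k => T (y k) :=
    Fin.comp_cons T x y
  simp only [phiMap, hT, Fin.sum_univ_succ, Fin.update_cons_zero, Fin.cons_zero, Fin.cons_succ,
    ← Fin.cons_update]
  abel

theorem phiMap_sub (T : g → g) (TV : V →+ V) {n : ℕ} (F G : (Fin n → g) → V) :
    phiMap T TV n (F - G) = phiMap T TV n F - phiMap T TV n G := by
  funext y
  simp only [phiMap, Pi.sub_apply, map_sub, sum_sub_distrib]
  abel

variable [AddCommGroup g]

def starBracket (br : g → g → g) (T : g → g) : g → g → g :=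
  fun a b => br a (T b) + br (T a) b

theorem map_starBracket (br : g → g → g) (T : g →+ g)
    (hRB : ∀ x y, br (T x) (T y) = T (br (T x) y + br x (T y))) (a b : g) :
    T (starBracket br T a b) = br (T a) (T b) := by
  rw [starBracket, hRB, add_comm]

variable (br : g → g → g) (T : g →+ g) (l r : g → V →+ V) (TV : V →+ V)
  (hRB : ∀ x y, br (T x) (T y) = T (br (T x) y + br x (T y)))
include hRB

theorem lpCoboundary_starAction_comp (hl : IsRBAction T TV l) (hr : IsRBAction T TV r) {n : ℕ}
    (F : (Fin n → g) → V) :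
    lpCoboundary (starBracket br T) (fun x => starAction T TV l x)
        (fun u x => starAction T TV r x u) n (fun z => TV (F fun k => T (z k)))
      = fun y => TV (lpCoboundary br (fun x => l x) (fun u x => r x u) n F fun k => T (y k)) := by
  funext y
  simp only [lpCoboundary, ← sum_filter, map_add, map_sum, map_zsmul, hl.starAction_apply_map,
    hr.starAction_apply_map, apply_update (fun _ => ⇑T), map_starBracket br T hRB]

/-- After the Rota–Baxter identity for `l` cancels the `T_V`-terms of `l'`, the two double sums
agree off the diagonal by `update_comm`; on the diagonal the bracket `[x, -]_*` splits in two. -/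
theorem cochainLieDeriv_starAction_phiMap (hl : IsRBAction T TV l) {n : ℕ}
    (f : MultilinearMap ℕ (fun _ : Fin n => g) V) (x : g) (y : Fin n → g) :
    cochainLieDeriv (starBracket br T) (fun x => starAction T TV l x) x (phiMap T TV n f) y
      = phiMap T TV n (cochainLieDeriv br (fun x => l x) (T x) f) y
        - TV (cochainLieDeriv br (fun x => l x) x f fun k => T (y k)) := by
  simp only [cochainLieDeriv, phiMap, map_sub, map_sum, hl.starAction_apply_map]
  simp only [starAction_apply, apply_update (fun _ => ⇑T), map_starBracket br T hRB,
    apply_update (fun _ => br (T x))]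
  eta_reduce
  simp only [sum_update_update_eq_add_sum_erase (fun w => TV (f w)), starBracket,
    f.map_update_add, map_add, sum_add_distrib, sum_sub_distrib]
  rw [sum_sum_erase_update_update_comm (fun w => TV (f w))]
  abel

theorem lpCoboundary_starAction_phiMap (hl : IsRBAction T TV l) (hr : IsRBAction T TV r)
    {n : ℕ} (f : MultilinearMap ℕ (fun _ : Fin n => g) V) :
    lpCoboundary (starBracket br T) (fun x => starAction T TV l x)
        (fun u x => starAction T TV r x u) n (phiMap T TV n f)
      = phiMap T TV (n + 1) (lpCoboundary br (fun x => l x) (fun u x => r x u) n f) := by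
  induction n with
  | zero =>
    funext w
    have hf (z : Fin 0 → g) : f z = f 0 := congrArg f (Subsingleton.elim _ _)
    simp [lpCoboundary, phiMap, hf, sub_eq_add_neg, add_comm]
  | succ n ih =>
    funext w
    have hphi : (fun z => phiMap T TV (n + 1) f (Fin.cons (w 0) z))
        = phiMap T TV n (f.curryLeft (T (w 0)))
          - fun z => TV (f.curryLeft (w 0) fun k => T (z k)) :=
      funext fun z => phiMap_cons _ _ f (w 0) z
    have hcartan : (fun z => lpCoboundary br (fun x => l x) (fun u x => r x u) (n + 1) f
          (Fin.cons (T (w 0)) z))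
        = cochainLieDeriv br (fun x => l x) (T (w 0)) f
          - lpCoboundary br (fun x => l x) (fun u x => r x u) n (f.curryLeft (T (w 0))) :=
      funext fun z => lpCoboundary_succ_cons _ _ _ f (T (w 0)) z
    rw [← Fin.cons_self_tail w, lpCoboundary_succ_cons, hphi, lpCoboundary_sub, ih,
      lpCoboundary_starAction_comp br T l r TV hRB hl hr (f.curryLeft (w 0)), phiMap_cons,
      hcartan, phiMap_sub, lpCoboundary_succ_cons,
      cochainLieDeriv_starAction_phiMap br T l TV hRB hl]
    simp only [Pi.sub_apply, map_sub]
    abel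

end RotaBaxter

section InducedStructure

variable {g V : Type*} [AddCommGroup g] [AddCommGroup V]
  (br : g →+ g →+ g) (T : g →+ g) (hRB : ∀ x y, br (T x) (T y) = T (br (T x) y + br x (T y)))
include hRB

theorem IsLeibnizBracket.starBracket (hbr : IsLeibnizBracket fun x y => br x y) :
    IsLeibnizBracket (starBracket (fun x y => br x y) T) := by
  have hT (a b : g) : T (br a (T b) + br (T a) b) = br (T a) (T b) :=
    map_starBracket (fun x y => br x y) T hRB a b
  intro x y z
  simp only [_root_.starBracket, hT]
  simp only [map_add, AddMonoidHom.add_apply, hbr x (T y) (T z), hbr (T x) y (T z),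
    hbr (T x) (T y) z]
  abel

theorem IsLeibnizRep.starAction (L R : g →+ V →+ V) (TV : V →+ V) (hL : IsRBAction T TV L)
    (hR : IsRBAction T TV R)
    (hrep : IsLeibnizRep (fun x y => br x y) (fun x => L x) (fun u x => R x u)) :
    IsLeibnizRep (starBracket (fun x y => br x y) T) (fun x => _root_.starAction T TV L x)
      (fun u x => _root_.starAction T TV R x u) := by
  have hT (a b : g) : T (br a (T b) + br (T a) b) = br (T a) (T b) :=
    map_starBracket (fun x y => br x y) T hRB a b
  obtain ⟨h₁, h₂, h₃⟩ := hrep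
  dsimp only at h₁ h₂ h₃
  refine ⟨fun x y u => ?_, fun x y u => ?_, fun x y u => ?_⟩ <;>
  simp only [_root_.starBracket, starAction_apply, hT, map_sub, hL _, hR _, map_add,
    AddMonoidHom.add_apply]
  · simp only [h₁ (T x) (T y) u, h₁ (T x) y u, h₁ x (T y) u, map_add]
    abel
  · simp only [h₂ (T x) (T y) u, h₂ (T x) y u, h₂ x (T y) u, map_add]
    abel
  · simp only [h₃ (T x) (T y) u, h₃ (T x) y u, h₃ x (T y) u, map_add]
    abel

end InducedStructure

section Complex

variable {g V : Type*} [AddCommGroup g] [AddCommGroup V]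

/-- The differential `d(α, β) = (δ α, -∂ β - φ α)` on
`C^{n+1} = Hom(g^{⊗(n+1)}, V) ⊕ Hom(g^{⊗n}, V)`. -/
def rbCoboundary (br : g → g → g) (T : g → g) (l r : g → V →+ V) (TV : V →+ V) (n : ℕ)
    (c : ((Fin (n + 1) → g) → V) × ((Fin n → g) → V)) :
    ((Fin (n + 2) → g) → V) × ((Fin (n + 1) → g) → V) :=
  (lpCoboundary br (fun x => l x) (fun u x => r x u) (n + 1) c.1,
    -lpCoboundary (starBracket br T) (fun x => starAction T TV l x)
      (fun u x => starAction T TV r x u) n c.2 - phiMap T TV (n + 1) c.1)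

theorem rbCoboundary_rbCoboundary (br : g →+ g →+ g) (T : g →+ g)
    (hRB : ∀ x y, br (T x) (T y) = T (br (T x) y + br x (T y))) (l r : g →+ V →+ V)
    (TV : V →+ V) (hbr : IsLeibnizBracket fun x y => br x y)
    (hrep : IsLeibnizRep (fun x y => br x y) (fun x => l x) (fun u x => r x u))
    (hl : IsRBAction T TV l) (hr : IsRBAction T TV r) {n : ℕ}
    (α : MultilinearMap ℕ (fun _ : Fin (n + 1) => g) V)
    (β : MultilinearMap ℕ (fun _ : Fin n => g) V) :
    rbCoboundary (fun x y => br x y) T l r TV (n + 1)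
      (rbCoboundary (fun x y => br x y) T l r TV n (α, β)) = 0 := by
  ext1
  · exact lpCoboundary_lpCoboundary _ _ _ hbr hrep α
  · simp only [rbCoboundary, lpCoboundary_sub, lpCoboundary_neg,
      lpCoboundary_lpCoboundary _ _ _ (hbr.starBracket br T hRB)
        (hrep.starAction br T hRB l r TV hl hr) β,
      lpCoboundary_starAction_phiMap (fun x y => br x y) T l r TV hRB hl hr α]
    simp

end Complex

theorem Bilin.flip {K A B C : Type*} [Field K] [AddCommGroup A] [Module K A] [AddCommGroup B]
    [Module K B] [AddCommGroup C] [Module K C] {f : A → B → C} (h : Bilin K f) :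
    Bilin K fun b a => f a b :=
  ⟨fun b b' a => h.2.2.1 a b b', fun c b a => h.2.2.2 c a b, fun b a a' => h.1 a a' b,
    fun c b a => h.2.1 c a b⟩

def Bilin.toAddMonoidHom₂ {K A B C : Type*} [Field K] [AddCommGroup A] [Module K A]
    [AddCommGroup B] [Module K B] [AddCommGroup C] [Module K C] {f : A → B → C}
    (h : Bilin K f) : A →+ B →+ C :=
  AddMonoidHom.mk' (fun a => AddMonoidHom.mk' (f a) (h.2.2.1 a)) fun a a' =>
    AddMonoidHom.ext (h.1 a a')

/-- The coboundary `d^n(α,β) = (δ^n α, -∂^{n-1} β - φ^n α)` of the Rota-Baxter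
Leibniz algebra cochain complex squares to zero for all `n ≥ 1` (here
`n = m + 1`): both components of `d^{n+1}(d^n(α,β))` vanish. -/
theorem rbla_coboundary_squares_to_zero {K : Type*} [Field K]
    {g : Type*} [AddCommGroup g] [Module K g]
    {V : Type*} [AddCommGroup V] [Module K V]
    (br : g → g → g) (hbil : Bilin K br) (hleib : IsLeibnizBracket br)
    (T : g → g) (hT : IsLinearMap K T)
    (hRB : ∀ x y, br (T x) (T y) = T (br (T x) y + br x (T y)))
    (l : g → V → V) (r : V → g → V) (TV : V → V)
    (hl : Bilin K l) (hr : Bilin K r) (hTV : IsLinearMap K TV)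
    (hrep : IsRBRep br T l r TV) :
    ∀ (m : ℕ) (α : MultilinearMap K (fun _ : Fin (m + 1) => g) V)
      (β : MultilinearMap K (fun _ : Fin m => g) V),
      (∀ x : Fin (m + 3) → g,
        lpCoboundary br l r (m + 2) (lpCoboundary br l r (m + 1) ⇑α) x = 0) ∧
      (∀ x : Fin (m + 2) → g,
        - lpCoboundary (fun a b => br a (T b) + br (T a) b)
            (fun a u => l (T a) u - TV (l a u))
            (fun u a => r u (T a) - TV (r u a)) (m + 1)
            (fun y =>
              - lpCoboundary (fun a b => br a (T b) + br (T a) b)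
                  (fun a u => l (T a) u - TV (l a u))
                  (fun u a => r u (T a) - TV (r u a)) m ⇑β y
                - phiMap T TV (m + 1) ⇑α y) x
          - phiMap T TV (m + 2) (lpCoboundary br l r (m + 1) ⇑α) x = 0) := by
  intro m α β
  obtain ⟨hrep, hlT, hrT⟩ := hrep
  have h := rbCoboundary_rbCoboundary hbil.toAddMonoidHom₂ (AddMonoidHom.mk' T hT.map_add) hRB
    hl.toAddMonoidHom₂ hr.flip.toAddMonoidHom₂ (AddMonoidHom.mk' TV hTV.map_add) hleib hrep hlT
    (fun x u => (hrT x u).trans (congrArg TV (add_comm _ _)))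
    (α.restrictScalars ℕ) (β.restrictScalars ℕ)
  exact ⟨fun x => congrFun (congrArg Prod.fst h) x, fun x => congrFun (congrArg Prod.snd h) x⟩
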